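/- Gibbard's collapse theorem (abstract form): Let L be a set of formulas with a transitive consequence relation ⊨, containing binary connectives →, ⊃ and ∧. Suppose (i) A → (B → C) and (A ∧ B) → C are mutually derivable for all A,B,C; (ii) A → B ⊨ A ⊃ B; (iii) ⊨ (A ∧ B) → B; (iv) if A and A' are mutually derivable then A → B and A' → B are mutually derivable; (v) (A ⊃ B) ∧ A and A ∧ B are mutually derivable, and from ⊨ A ⊃ B one may infer A ⊨ B. Then A ⊃ B ⊨ A → B for all A, B. -/
import Mathlib


/-- Formulas with conjunction, an indicative conditional `ind` (→)
and a material conditional `mat` (⊃). -/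
inductive F : Type
  | atom : ℕ → F
  | and : F → F → F
  | ind : F → F → F
  | mat : F → F → F
deriving DecidableEq

/-- Gibbard's collapse theorem (abstract form). `C A B` is single-premise
consequence `A ⊨ B`; `Thm A` is theoremhood `⊨ A`. -/
theorem gibbard_collapse
    (C : F → F → Prop) (Thm : F → Prop)
    -- structural assumptions
    (htrans : ∀ A B D : F, C A B → C B D → C A D)
    (hthm : ∀ A B : F, Thm A → C A B → Thm B)
    -- (i) Import-Export
    (hIE₁ : ∀ A B D : F, C (F.ind A (F.ind B D)) (F.ind (F.and A B) D))
    (hIE₂ : ∀ A B D : F, C (F.ind (F.and A B) D) (F.ind A (F.ind B D)))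
    -- (ii) Stronger-than-Material
    (hSTM : ∀ A B : F, C (F.ind A B) (F.mat A B))
    -- (iii) Supraclassicality instance: ⊨ (A ∧ B) → B
    (hCE : ∀ A B : F, Thm (F.ind (F.and A B) B))
    -- (iv) Left Logical Equivalence
    (hLLE : ∀ A A' B : F, C A A' → C A' A →
      C (F.ind A B) (F.ind A' B) ∧ C (F.ind A' B) (F.ind A B))
    -- (v) classicality of ⊃ : absorption laws and (meta) Modus Ponens
    (habs₁ : ∀ A B : F, C (F.and (F.mat A B) A) (F.and A B))
    (habs₂ : ∀ A B : F, C (F.and A B) (F.and (F.mat A B) A))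
    (hMP : ∀ A B : F, Thm (F.mat A B) → C A B) :
    ∀ A B : F, C (F.mat A B) (F.ind A B) := by
  intro A B
  -- ⊨ (A ∧ B) → B
  have h1 : Thm (F.ind (F.and A B) B) := hCE A B
  -- by LLE with absorption: ⊨ ((A ⊃ B) ∧ A) → B
  have h2 : Thm (F.ind (F.and (F.mat A B) A) B) :=
    hthm _ _ h1 ((hLLE (F.and A B) (F.and (F.mat A B) A) B (habs₂ A B) (habs₁ A B)).1)
  -- Import-Export: ⊨ (A ⊃ B) → (A → B)
  have h3 : Thm (F.ind (F.mat A B) (F.ind A B)) :=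
    hthm _ _ h2 (hIE₂ (F.mat A B) A B)
  -- STM: ⊨ (A ⊃ B) ⊃ (A → B)
  have h4 : Thm (F.mat (F.mat A B) (F.ind A B)) :=
    hthm _ _ h3 (hSTM _ _)
  exact hMP _ _ h4
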